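/- If n and m are both powers of 2 with m ≤ n, then there is a cycle of length m that divides Q_n (for m ≥ 4). -/

import Mathlib

open SimpleGraph

/-- `H` divides `G`: the edge set of `G` can be partitioned into edge sets of
subgraphs of `G`, each isomorphic to `H`. -/
def GraphDivides {α β : Type} (H : SimpleGraph α) (G : SimpleGraph β) : Prop :=
  ∃ (ι : Type) (f : ι → G.Subgraph),
    (∀ i, Nonempty (H ≃g (f i).coe)) ∧
    ∀ e ∈ G.edgeSet, ∃! i, e ∈ (f i).edgeSet

/-- The `n`-dimensional hypercube graph. -/
def cube (n : ℕ) : SimpleGraph (Fin n → ZMod 2) where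
  Adj x y := hammingDist x y = 1
  symm := ⟨fun x y h => (hammingDist_comm y x).trans h⟩
  loopless := ⟨fun x h => by simp [hammingDist_self] at h⟩

/-!
For even `k`, the closed walk in `Q_k` that flips the coordinates `0, 1, …, k-1, 0, 1, …, k-1`
in turn is a `2k`-cycle (`snake`) using each direction `i` exactly twice, at the vertices
`snake i` and `snake i + 𝟙`. Hence the edge `{x, x + eᵢ}` lies on the translate of this cycle
by `g` iff `x - g - snake i ∈ span {eᵢ, 𝟙}`. As `k` is even, this span is complementary to
`{g | ∑ g = 0, g 0 = 0}`, so the translates by that subspace partition the edges of `Q_k`.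
Since `Q_{a+b} ≅ Q_a □ Q_b` and a box product of two graphs divisible by `H` is divisible
by `H`, the cycle `C_{2k}` divides `Q_n` whenever `k ∣ n`; take `k = m / 2`.
-/

theorem ZMod.eq_zero_or_eq_one (a : ZMod 2) : a = 0 ∨ a = 1 := by
  revert a
  decide

theorem ZMod.exists_two_smul_iff {A : Type*} [AddCommGroup A] [Module (ZMod 2) A]
    (P : A → Prop) (v : A) : (∃ a : ZMod 2, P (a • v)) ↔ P 0 ∨ P v := by
  constructor
  · rintro ⟨a, h⟩
    rcases ZMod.eq_zero_or_eq_one a with rfl | rfl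
    · exact Or.inl (by simpa using h)
    · exact Or.inr (by simpa using h)
  · rintro (h | h)
    · exact ⟨0, by simpa using h⟩
    · exact ⟨1, by simpa using h⟩

theorem Sym2.mk_add_eq_mk_add_iff {A : Type*} [AddCommGroup A] [Module (ZMod 2) A]
    (x y v w : A) : s(x, x + v) = s(y, y + w) ↔ v = w ∧ ∃ a : ZMod 2, x = y + a • v := by
  rw [Sym2.eq_iff, ZMod.exists_two_smul_iff (fun z => x = y + z), add_zero]
  constructor
  · rintro (⟨rfl, h⟩ | ⟨rfl, h⟩)
    · exact ⟨add_left_cancel h, Or.inl rfl⟩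
    · rw [add_assoc, add_eq_left] at h
      have hvw : v = w := (neg_eq_of_add_eq_zero_right h).symm.trans (ZModModule.neg_eq_self w)
      exact ⟨hvw, Or.inr (by rw [hvw])⟩
  · rintro ⟨rfl, rfl | rfl⟩
    · exact Or.inl ⟨rfl, rfl⟩
    · exact Or.inr ⟨rfl, by rw [add_assoc, ZModModule.add_self, add_zero]⟩

theorem Pi.single_left_inj {ι β : Type*} [DecidableEq ι] [Zero β] {b : β} (hb : b ≠ 0)
    {i j : ι} : (Pi.single i b : ι → β) = Pi.single j b ↔ i = j := by
  refine ⟨fun h => ?_, fun h => h ▸ rfl⟩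
  by_contra hij
  simpa [Pi.single_apply, hij, hb] using congrFun h i

namespace SimpleGraph

variable {α β γ : Type} {H : SimpleGraph α} {G : SimpleGraph β} {G' : SimpleGraph γ}

theorem Subgraph.map_mem_edgeSet_map_iff {f : G →g G'} (hf : Function.Injective f)
    (S : G.Subgraph) (d : Sym2 β) : Sym2.map f d ∈ (S.map f).edgeSet ↔ d ∈ S.edgeSet := by
  rw [Subgraph.edgeSet_map]
  exact (Sym2.map.injective hf).mem_set_image

theorem Copy.toSubgraph_comp (c' : Copy G G') (c : Copy H G) :
    (c'.comp c).toSubgraph = c.toSubgraph.map c'.toHom :=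
  Subgraph.map_comp ⊤ c.toHom c'.toHom

theorem Copy.map_mem_edgeSet_comp_iff (c' : Copy G G') (c : Copy H G) (d : Sym2 β) :
    Sym2.map c' d ∈ (c'.comp c).toSubgraph.edgeSet ↔ d ∈ c.toSubgraph.edgeSet := by
  rw [Copy.toSubgraph_comp]
  exact Subgraph.map_mem_edgeSet_map_iff c'.injective _ d

theorem Copy.mk_mem_edgeSet_toSubgraph_iff (c : Copy H G) (x y : β) :
    s(x, y) ∈ c.toSubgraph.edgeSet ↔ ∃ a b, H.Adj a b ∧ c a = x ∧ c b = y := by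
  rw [Subgraph.edgeSet_map]
  constructor
  · rintro ⟨d, hd, hdxy⟩
    induction d using Sym2.ind with | _ a b =>
    rw [Sym2.map_mk, Sym2.eq_iff] at hdxy
    rcases hdxy with ⟨rfl, rfl⟩ | ⟨rfl, rfl⟩
    · exact ⟨a, b, hd, rfl, rfl⟩
    · exact ⟨b, a, H.adj_symm hd, rfl, rfl⟩
  · rintro ⟨a, b, hab, rfl, rfl⟩
    exact ⟨s(a, b), hab, rfl⟩

theorem cycleGraph_adj_iff_eq_add_one {m : ℕ} [NeZero m] (hm : m ≠ 1) {u v : Fin m} :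
    (cycleGraph m).Adj u v ↔ u = v + 1 ∨ v = u + 1 := by
  obtain _ | _ | m := m
  · exact u.elim0
  · exact absurd rfl hm
  · rw [cycleGraph_adj, sub_eq_iff_eq_add, sub_eq_iff_eq_add, add_comm 1 v, add_comm 1 u]

theorem ne_one_of_forall_adj_add_one {m : ℕ} [NeZero m] {f : Fin m → β}
    (hadj : ∀ t, G.Adj (f t) (f (t + 1))) : m ≠ 1 := by
  rintro rfl
  exact G.irrefl (v := f 0) (by simpa [Subsingleton.elim (0 + 1 : Fin 1) 0] using hadj 0)

def Copy.ofCycle {m : ℕ} [NeZero m] (f : Fin m → β) (hf : Function.Injective f)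
    (hadj : ∀ t, G.Adj (f t) (f (t + 1))) : Copy (cycleGraph m) G := by
  refine ⟨⟨f, fun {u v} huv => ?_⟩, hf⟩
  rcases (cycleGraph_adj_iff_eq_add_one (ne_one_of_forall_adj_add_one hadj)).mp huv
    with rfl | rfl
  · exact (hadj v).symm
  · exact hadj u

theorem Copy.mk_mem_edgeSet_ofCycle_iff {m : ℕ} [NeZero m] {f : Fin m → β}
    {hf : Function.Injective f} {hadj : ∀ t, G.Adj (f t) (f (t + 1))} {x y : β} :
    s(x, y) ∈ (Copy.ofCycle f hf hadj).toSubgraph.edgeSet ↔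
      ∃ t, s(x, y) = s(f t, f (t + 1)) := by
  rw [Copy.mk_mem_edgeSet_toSubgraph_iff]
  simp only [cycleGraph_adj_iff_eq_add_one (ne_one_of_forall_adj_add_one hadj)]
  constructor
  · rintro ⟨u, v, rfl | rfl, rfl, rfl⟩
    · exact ⟨v, Sym2.eq_swap⟩
    · exact ⟨u, rfl⟩
  · rintro ⟨t, hxy⟩
    rcases Sym2.eq_iff.mp hxy with ⟨rfl, rfl⟩ | ⟨rfl, rfl⟩
    · exact ⟨t, t + 1, Or.inr rfl, rfl, rfl⟩
    · exact ⟨t + 1, t, Or.inl rfl, rfl, rfl⟩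

end SimpleGraph

section GraphDivides

variable {α β γ : Type} {H : SimpleGraph α} {G : SimpleGraph β} {G' : SimpleGraph γ}

theorem graphDivides_iff_exists_copy :
    GraphDivides H G ↔ ∃ (ι : Type) (c : ι → Copy H G),
      ∀ e ∈ G.edgeSet, ∃! i, e ∈ (c i).toSubgraph.edgeSet := by
  constructor
  · rintro ⟨ι, f, hiso, hpart⟩
    refine ⟨ι, fun i => (f i).coeCopy.comp (hiso i).some.toCopy, fun e he => ?_⟩
    simpa only [Copy.toSubgraph_comp, Copy.toSubgraph, Subgraph.map_iso_top,
      Subgraph.coeCopy, Subgraph.map_hom_top] using hpart e he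
  · rintro ⟨ι, c, hpart⟩
    exact ⟨ι, fun i => (c i).toSubgraph, fun i => ⟨(c i).isoToSubgraph⟩, hpart⟩

theorem GraphDivides.of_subsingleton [Subsingleton β] : GraphDivides H G :=
  ⟨Empty, Empty.elim, Empty.rec, fun e he => by
    induction e using Sym2.ind with
    | _ x y => exact absurd (Subsingleton.elim x y) (G.ne_of_adj he)⟩

theorem GraphDivides.of_iso (h : GraphDivides H G) (φ : G ≃g G') : GraphDivides H G' := by
  obtain ⟨ι, c, hpart⟩ := graphDivides_iff_exists_copy.mp h
  refine graphDivides_iff_exists_copy.mpr ⟨ι, fun i => φ.toCopy.comp (c i), fun e he => ?_⟩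
  have hmap : Sym2.map φ.toCopy (Sym2.map φ.symm e) = e := by simp [Sym2.map_map]
  rw [← hmap] at he ⊢
  simp only [Copy.map_mem_edgeSet_comp_iff]
  exact hpart _ ((φ.map_mem_edgeSet_iff).mp he)

theorem GraphDivides.of_edgeSet_partition {J : Type} (F : J → G.Subgraph)
    (hF : ∀ j, GraphDivides H (F j).coe)
    (hpart : ∀ e ∈ G.edgeSet, ∃! j, e ∈ (F j).edgeSet) : GraphDivides H G := by
  choose ι c hc using fun j => graphDivides_iff_exists_copy.mp (hF j)
  refine graphDivides_iff_exists_copy.mpr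
    ⟨Σ j, ι j, fun p => (F p.1).coeCopy.comp (c p.1 p.2), fun e he => ?_⟩
  obtain ⟨j, hj, hj_unique⟩ := hpart e he
  rw [← Subgraph.map_hom_top (F j), Subgraph.edgeSet_map] at hj
  obtain ⟨d, hd, rfl⟩ := hj
  obtain ⟨i, hi, hi_unique⟩ := hc j d hd
  refine ⟨⟨j, i⟩, (Copy.map_mem_edgeSet_comp_iff (F j).coeCopy _ d).mpr hi, ?_⟩
  rintro ⟨j', i'⟩ h'
  change _ ∈ ((F j').coeCopy.comp (c j' i')).toSubgraph.edgeSet at h'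
  have h'F : Sym2.map (F j).hom d ∈ (F j').edgeSet := by
    rw [Copy.toSubgraph_comp] at h'
    rw [← Subgraph.map_hom_top (F j')]
    exact Subgraph.edgeSet_mono (Subgraph.map_mono le_top) h'
  obtain rfl : j = j' := (hj_unique j' h'F).symm
  obtain rfl := hi_unique i' ((Copy.map_mem_edgeSet_comp_iff (F j).coeCopy _ d).mp h')
  rfl

theorem GraphDivides.boxProd (h₁ : GraphDivides H G) (h₂ : GraphDivides H G') :
    GraphDivides H (G □ G') := by
  let F : γ ⊕ β → (G □ G').Subgraph := Sum.elim
    (fun b => (boxProdLeft G G' b).toCopy.toSubgraph)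
    (fun a => (boxProdRight G G' a).toCopy.toSubgraph)
  refine GraphDivides.of_edgeSet_partition F ?_ fun e he => ?_
  · rintro (b | a)
    · exact h₁.of_iso (boxProdLeft G G' b).toCopy.isoToSubgraph
    · exact h₂.of_iso (boxProdRight G G' a).toCopy.isoToSubgraph
  induction e using Sym2.ind with | _ p q =>
  have hF : ∀ j, s(p, q) ∈ (F j).edgeSet ↔ Sum.elim
      (fun b => G.Adj p.1 q.1 ∧ p.2 = b ∧ q.2 = b)
      (fun a => G'.Adj p.2 q.2 ∧ p.1 = a ∧ q.1 = a) j := by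
    rintro (b | a) <;>
      simp only [F, Sum.elim_inl, Sum.elim_inr, Copy.mk_mem_edgeSet_toSubgraph_iff] <;>
      constructor
    · rintro ⟨a, a', h, rfl, rfl⟩
      exact ⟨h, rfl, rfl⟩
    · rintro ⟨h, hp, hq⟩
      exact ⟨p.1, q.1, h, Prod.ext rfl hp.symm, Prod.ext rfl hq.symm⟩
    · rintro ⟨b, b', h, rfl, rfl⟩
      exact ⟨h, rfl, rfl⟩
    · rintro ⟨h, hp, hq⟩
      exact ⟨p.2, q.2, h, Prod.ext hp.symm rfl, Prod.ext hq.symm rfl⟩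
  simp only [hF]
  rcases he with ⟨hadj, hpq⟩ | ⟨hadj, hpq⟩
  · refine ⟨.inl p.2, ⟨hadj, rfl, hpq.symm⟩, ?_⟩
    rintro (b | a) ⟨hadj', hp, hq⟩
    · rw [hp]
    · exact absurd (hp.trans hq.symm) hadj.ne
  · refine ⟨.inr p.1, ⟨hadj, rfl, hpq.symm⟩, ?_⟩
    rintro (b | a) ⟨hadj', hp, hq⟩
    · exact absurd (hp.trans hq.symm) hadj.ne
    · rw [hp]

end GraphDivides

theorem hammingDist_append {β : Type*} [DecidableEq β] {a b : ℕ} (x₁ y₁ : Fin a → β)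
    (x₂ y₂ : Fin b → β) :
    hammingDist (Fin.append x₁ x₂) (Fin.append y₁ y₂) =
      hammingDist x₁ y₁ + hammingDist x₂ y₂ := by
  simp only [hammingDist, Finset.card_filter, Fin.sum_univ_add, Fin.append_left,
    Fin.append_right]

def cubeAppendIso (a b : ℕ) : (cube a).boxProd (cube b) ≃g cube (a + b) where
  toEquiv := Fin.appendEquiv a b
  map_rel_iff' {x y} := by
    change hammingDist (Fin.append x.1 x.2) (Fin.append y.1 y.2) = 1 ↔ _
    rw [hammingDist_append, boxProd_adj]
    change _ ↔ hammingDist _ _ = 1 ∧ _ ∨ hammingDist _ _ = 1 ∧ _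
    rw [← hammingDist_eq_zero (x := x.2), ← hammingDist_eq_zero (x := x.1)]
    omega

theorem hammingNorm_eq_one_iff {n : ℕ} {v : Fin n → ZMod 2} :
    hammingNorm v = 1 ↔ ∃ i, v = Pi.single i 1 := by
  rw [hammingNorm, Finset.card_eq_one]
  refine exists_congr fun i => ?_
  rw [Finset.ext_iff, funext_iff]
  refine forall_congr' fun j => ?_
  rw [Finset.mem_filter, Finset.mem_singleton, Pi.single_apply]
  rcases ZMod.eq_zero_or_eq_one (v j) with hv | hv <;>
    rcases eq_or_ne j i with rfl | hji <;> simp [*]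

theorem cube_adj_iff {n : ℕ} {x y : Fin n → ZMod 2} :
    (cube n).Adj x y ↔ ∃ i, y = x + Pi.single i 1 := by
  change hammingDist x y = 1 ↔ _
  simp only [hammingDist_eq_hammingNorm, hammingNorm_eq_one_iff, neg_add_eq_iff_eq_add]

section Snake

open Fin.NatCast

variable {k : ℕ} [NeZero k]

def snake (k : ℕ) [NeZero k] (t : ℕ) : Fin k → ZMod 2 :=
  ∑ s ∈ Finset.range t, Pi.single (s : Fin k) 1

theorem snake_succ (t : ℕ) : snake k (t + 1) = snake k t + Pi.single (t : Fin k) 1 :=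
  Finset.sum_range_succ _ _

theorem snake_add_self (t : ℕ) : snake k (t + k) = snake k t + 1 := by
  rw [snake, Finset.sum_range_add, ← snake]
  congr 1
  calc ∑ s ∈ Finset.range k, Pi.single ((t + s : ℕ) : Fin k) (1 : ZMod 2)
      = ∑ j : Fin k, Pi.single ((t : Fin k) + j) 1 := by
        rw [← Fin.sum_univ_eq_sum_range]
        simp only [Nat.cast_add, Fin.cast_val_eq_self]
    _ = ∑ j : Fin k, Pi.single j 1 :=
        Equiv.sum_comp (Equiv.addLeft (t : Fin k)) (fun j => Pi.single j (1 : ZMod 2))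
    _ = 1 := Finset.univ_sum_single 1

theorem snake_periodic : Function.Periodic (snake k) (2 * k) := fun t => by
  rw [two_mul, ← add_assoc, snake_add_self, snake_add_self, add_assoc,
    ZModModule.add_self, add_zero]

theorem snake_apply_of_le {t : ℕ} (ht : t ≤ k) (j : Fin k) :
    snake k t j = if (j : ℕ) < t then 1 else 0 := by
  induction t with
  | zero => simp [snake]
  | succ t ih =>
    rw [snake_succ, Pi.add_apply, ih (by omega)]
    simp only [Pi.single_apply, Fin.ext_iff, Fin.val_natCast, Nat.mod_eq_of_lt (by omega : t < k)]
    split_ifs <;> first | rfl | omega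

theorem snake_injOn_lt : Set.InjOn (snake k) (Set.Iio k) := fun r hr r' hr' h => by
  simp only [Set.mem_Iio] at hr hr'
  have key : ∀ j : Fin k, (j : ℕ) < r ↔ (j : ℕ) < r' := fun j => by
    have := congrFun h j
    rw [snake_apply_of_le hr.le, snake_apply_of_le hr'.le] at this
    split_ifs at this <;> first | omega | exact absurd this (by decide)
  have := key ⟨min r r', by omega⟩
  simp only at this
  omega

theorem snake_apply_last {r : ℕ} (hr : r < k) : snake k r ⟨k - 1, by omega⟩ = 0 := by
  rw [snake_apply_of_le hr.le, if_neg (by simp only; omega)]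

theorem snake_injOn : Set.InjOn (snake k) (Set.Iio (2 * k)) := fun t ht t' ht' h => by
  wlog hle : t ≤ t' generalizing t t'
  · exact (this t' ht' t ht h.symm (by omega)).symm
  simp only [Set.mem_Iio] at ht ht'
  rcases lt_or_ge t' k with ht'k | ht'k
  · exact snake_injOn_lt (show t < k by omega) ht'k h
  obtain ⟨r', rfl⟩ := Nat.exists_eq_add_of_le' ht'k
  rw [snake_add_self] at h
  rcases lt_or_ge t k with htk | htk
  · have hlast := congrFun h ⟨k - 1, by omega⟩
    rw [Pi.add_apply, snake_apply_last htk, snake_apply_last (by omega), Pi.one_apply] at hlast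
    exact absurd hlast (by decide)
  obtain ⟨r, rfl⟩ := Nat.exists_eq_add_of_le' htk
  rw [snake_add_self] at h
  rw [snake_injOn_lt (show r < k by omega) (show r' < k by omega) (add_right_cancel h)]

theorem snake_val_add_one (t : Fin (2 * k)) :
    snake k ((t + 1 : Fin (2 * k)) : ℕ) = snake k t + Pi.single ((t : ℕ) : Fin k) 1 := by
  have hk : 1 < 2 * k := by have := NeZero.pos k; omega
  rw [Fin.val_add, snake_periodic.map_mod_nat, Fin.val_one', Nat.mod_eq_of_lt hk, snake_succ]

theorem add_snake_injective (g : Fin k → ZMod 2) :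
    Function.Injective fun t : Fin (2 * k) => g + snake k t :=
  fun t t' h => Fin.ext (snake_injOn t.isLt t'.isLt (add_left_cancel h))

theorem cube_adj_add_snake (g : Fin k → ZMod 2) (t : Fin (2 * k)) :
    (cube k).Adj (g + snake k t) (g + snake k ↑(t + 1)) :=
  cube_adj_iff.mpr ⟨(t : ℕ), by rw [snake_val_add_one, add_assoc]⟩

def snakeCopy (g : Fin k → ZMod 2) : Copy (cycleGraph (2 * k)) (cube k) :=
  Copy.ofCycle (fun t => g + snake k t) (add_snake_injective g) (cube_adj_add_snake g)

theorem exists_snake_iff (i : Fin k) (P : (Fin k → ZMod 2) → Prop) :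
    (∃ t : Fin (2 * k), ((t : ℕ) : Fin k) = i ∧ P (snake k t)) ↔
      ∃ b : ZMod 2, P (snake k i + b • 1) := by
  rw [ZMod.exists_two_smul_iff (fun z => P (snake k i + z)), add_zero]
  constructor
  · rintro ⟨t, rfl, ht⟩
    rw [Fin.val_natCast]
    rcases lt_or_ge (t : ℕ) k with htk | htk
    · exact Or.inl (by rwa [Nat.mod_eq_of_lt htk])
    · obtain ⟨r, hr⟩ := Nat.exists_eq_add_of_le' htk
      rw [hr, snake_add_self] at ht
      rw [hr, Nat.add_mod_right, Nat.mod_eq_of_lt (by omega)]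
      exact Or.inr ht
  · rintro (h | h)
    · exact ⟨⟨i, by omega⟩, Fin.cast_val_eq_self i, h⟩
    · refine ⟨⟨i + k, by omega⟩, by simp, by rwa [snake_add_self]⟩

theorem mk_add_single_mem_edgeSet_snakeCopy_iff (g x : Fin k → ZMod 2) (i : Fin k) :
    s(x, x + Pi.single i 1) ∈ (snakeCopy g).toSubgraph.edgeSet ↔
      ∃ b a : ZMod 2, x = g + (snake k i + b • 1) + a • Pi.single i 1 := by
  rw [snakeCopy, Copy.mk_mem_edgeSet_ofCycle_iff]
  simp only [snake_val_add_one, ← add_assoc, Sym2.mk_add_eq_mk_add_iff,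
    Pi.single_left_inj one_ne_zero, eq_comm (a := i)]
  refine (exists_snake_iff i (fun z => ∃ a : ZMod 2, x = g + z + a • Pi.single i 1)).trans ?_
  simp only [add_assoc]

end Snake

theorem existsUnique_eq_add_smul_one_add_smul_single {R : Type*} [CommRing R] {k : ℕ}
    [NeZero k] (hk : (k : R) = 0) (x y : Fin k → R) (i : Fin k) :
    ∃! g : {g : Fin k → R // ∑ j, g j = 0 ∧ g 0 = 0},
      ∃ b a : R, x = g.1 + (y + b • 1) + a • Pi.single i 1 := by
  set e : Fin k → R := Pi.single i 1
  have hsum : ∀ (g : Fin k → R) (b a : R),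
      ∑ j, (g + (y + b • 1) + a • e) j = ∑ j, g j + ∑ j, y j + a := by
    intro g b a
    simp [e, Finset.sum_add_distrib, hk, ← Finset.mul_sum]
  have hzero : ∀ (g : Fin k → R) (b a : R),
      (g + (y + b • 1) + a • e) 0 = g 0 + y 0 + b + a * e 0 := by
    intro g b a
    simp only [Pi.add_apply, Pi.smul_apply, Pi.one_apply, smul_eq_mul, mul_one]
    ring
  -- Since `∑ j, (1 : Fin k → R) j = k = 0`, `∑ g = 0` fixes `a`; then `g 0 = 0` fixes `b`.
  set a₀ := ∑ j, x j - ∑ j, y j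
  set b₀ := x 0 - y 0 - a₀ * e 0
  set g₀ := x - (y + b₀ • 1) - a₀ • e
  have hx : x = g₀ + (y + b₀ • 1) + a₀ • e := by simp only [g₀]; abel
  refine ⟨⟨g₀, ?_, ?_⟩, ⟨b₀, a₀, hx⟩, ?_⟩
  · have := hsum g₀ b₀ a₀
    rw [← hx] at this
    linear_combination -this
  · have := hzero g₀ b₀ a₀
    rw [← hx] at this
    linear_combination -this
  · rintro ⟨g, hg, hg0⟩ ⟨b, a, hxg⟩
    have ha : a = a₀ := by
      have := hsum g b a
      rw [← hxg, hg] at this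
      linear_combination -this
    have hb : b = b₀ := by
      have := hzero g b a
      rw [← hxg, hg0, ha] at this
      linear_combination -this
    subst ha hb
    ext1
    simp only [g₀, hxg]
    abel

theorem cycleGraph_two_mul_divides_cube_self {k : ℕ} (hk : Even k) (hk0 : k ≠ 0) :
    GraphDivides (cycleGraph (2 * k)) (cube k) := by
  have : NeZero k := ⟨hk0⟩
  refine graphDivides_iff_exists_copy.mpr ⟨{g : Fin k → ZMod 2 // ∑ j, g j = 0 ∧ g 0 = 0},
    fun g => snakeCopy g.1, fun e he => ?_⟩
  induction e using Sym2.ind with | _ x y =>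
  obtain ⟨i, rfl⟩ := cube_adj_iff.mp ((cube k).mem_edgeSet.mp he)
  simp only [mk_add_single_mem_edgeSet_snakeCopy_iff]
  exact existsUnique_eq_add_smul_one_add_smul_single hk.natCast_zmod_two x (snake k i) i

theorem cycleGraph_two_mul_divides_cube {k n : ℕ} (hk : Even k) (hk0 : k ≠ 0) (hkn : k ∣ n) :
    GraphDivides (cycleGraph (2 * k)) (cube n) := by
  obtain ⟨j, rfl⟩ := hkn
  induction j with
  | zero => rw [Nat.mul_zero]; exact GraphDivides.of_subsingleton
  | succ j ih =>
    rw [Nat.mul_succ]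
    exact (ih.boxProd (cycleGraph_two_mul_divides_cube_self hk hk0)).of_iso (cubeAppendIso _ _)

theorem cycle_pow_two_divides_cube_pow_two (a b n m : ℕ) (hn : n = 2 ^ a) (hm : m = 2 ^ b)
    (hle : m ≤ n) (h4 : 4 ≤ m) : GraphDivides (cycleGraph m) (cube n) := by
  subst hn hm
  have hb : 2 ≤ b := (Nat.pow_le_pow_iff_right Nat.one_lt_two).mp (h4 : 2 ^ 2 ≤ 2 ^ b)
  have hba : b ≤ a := (Nat.pow_le_pow_iff_right Nat.one_lt_two).mp hle
  obtain ⟨c, rfl⟩ : ∃ c, b = c + 1 := ⟨b - 1, by omega⟩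
  rw [pow_succ']
  exact cycleGraph_two_mul_divides_cube (Nat.even_pow.mpr ⟨even_two, by omega⟩)
    (pow_ne_zero c two_ne_zero) (pow_dvd_pow 2 (by omega))
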